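/- arXiv:2103.08810 — 5 statements merged into one kernel-verified Lean document; each statement's English description precedes it below -/
import Mathlib

section
/- For every integer n ≥ 2 and every ζ ∈ ℝ, the derivative of the generalized Jacobi polynomial of index (−1,−1) satisfies (K_n^{−1,−1})'(ζ) = ((n−1)/2)·J_{n−1}^{0,0}(ζ). -/
open scoped BigOperators

/-- Generalized binomial coefficient `binom(x, k)` for real `x` and natural `k`. -/
noncomputable def genBinom (x : ℝ) (k : ℕ) : ℝ :=
  (∏ i ∈ Finset.range k, (x - (i : ℝ))) / (Nat.factorial k : ℝ)

/-- Jacobi polynomial `J_n^{α,β}(ζ) = Σ_{k=0}^{n} binom(n+α, n−k)·binom(n+β, k)·((ζ−1)/2)^k·((ζ+1)/2)^(n−k)`. -/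
noncomputable def jacobiP (n : ℕ) (α β : ℝ) (ζ : ℝ) : ℝ :=
  ∑ k ∈ Finset.range (n + 1),
    genBinom ((n : ℝ) + α) (n - k) * genBinom ((n : ℝ) + β) k *
      ((ζ - 1) / 2) ^ k * ((ζ + 1) / 2) ^ (n - k)

/-- Generalized Jacobi polynomial of index `(−1,−1)`. -/
noncomputable def K1 : ℕ → ℝ → ℝ
  | 0, ζ => (1 - ζ) / 2
  | 1, ζ => (1 + ζ) / 2
  | (n + 2), ζ => ((ζ ^ 2 - 1) / 4) * jacobiP n 1 1 ζ

/-!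
Put `u = (ζ - 1) / 2` and `v = (ζ + 1) / 2`, so that `u' = v' = 1 / 2` and `u v = (ζ² - 1) / 4`.
Then `J_N^{0,0}` is the binary form `∑ C(N,k)² uᵏ v^(N-k)` and `K_{N+1}^{-1,-1}` is the binary form
of degree `N + 1` with coefficients `C(N,k) C(N,k-1)`. Differentiating termwise, the absorption
identity `(k + 1) C(N,k+1) = (N - k) C(N,k)` collapses the new coefficients to `N C(N,k)²`.
-/

open Finset

lemma genBinom_natCast (N k : ℕ) : genBinom N k = N.choose k := by
  rw [genBinom, ← descPochhammer_eval_eq_prod_range, descPochhammer_eval_eq_descFactorial,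
    Nat.descFactorial_eq_factorial_mul_choose, Nat.cast_mul,
    mul_div_cancel_left₀ _ (by positivity)]

noncomputable def binaryForm (a : ℕ → ℝ) (N : ℕ) (x y : ℝ) : ℝ :=
  ∑ k ∈ range (N + 1), a k * x ^ k * y ^ (N - k)

lemma binaryForm_congr {a b : ℕ → ℝ} {N : ℕ} (h : ∀ k ≤ N, a k = b k) (x y : ℝ) :
    binaryForm a N x y = binaryForm b N x y :=
  sum_congr rfl fun k hk => by rw [h k (Nat.lt_succ_iff.mp (mem_range.mp hk))]

lemma binaryForm_const_mul (r : ℝ) (a : ℕ → ℝ) (N : ℕ) (x y : ℝ) :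
    binaryForm (fun k => r * a k) N x y = r * binaryForm a N x y := by
  simp only [binaryForm, mul_sum, mul_assoc]

lemma mul_mul_binaryForm {b : ℕ → ℝ} {N : ℕ} (h₀ : b 0 = 0) (hN : b (N + 2) = 0) (x y : ℝ) :
    x * y * binaryForm (fun k => b (k + 1)) N x y = binaryForm b (N + 2) x y := by
  rw [binaryForm, binaryForm, sum_range_succ _ (N + 2), sum_range_succ' _ (N + 1), mul_sum]
  simp only [h₀, hN, zero_mul, add_zero]
  refine sum_congr rfl fun k hk => ?_
  rw [show N + 2 - (k + 1) = N - k + 1 by grind]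
  ring

lemma hasDerivAt_binaryForm (a : ℕ → ℝ) (N : ℕ) {u v : ℝ → ℝ} {c x : ℝ}
    (hu : HasDerivAt u c x) (hv : HasDerivAt v c x) :
    HasDerivAt (fun x => binaryForm a (N + 1) (u x) (v x))
      (c * binaryForm (fun k => (k + 1) * a (k + 1) + (N + 1 - k) * a k) N (u x) (v x)) x := by
  have hterm : ∀ k, HasDerivAt (fun x => a k * u x ^ k * v x ^ (N + 1 - k))
      (a k * (k * u x ^ (k - 1) * c) * v x ^ (N + 1 - k) +
        a k * u x ^ k * ((N + 1 - k : ℕ) * v x ^ (N + 1 - k - 1) * c)) x :=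
    fun k => ((hu.pow k).const_mul (a k)).mul (hv.pow (N + 1 - k))
  refine (HasDerivAt.fun_sum (u := range (N + 2)) fun k _ => hterm k).congr_deriv ?_
  rw [sum_add_distrib, sum_range_succ', sum_range_succ _ (N + 1)]
  simp only [CharP.cast_eq_zero, zero_mul, mul_zero, add_zero, Nat.sub_self]
  rw [← sum_add_distrib, binaryForm, mul_sum]
  refine sum_congr rfl fun k hk => ?_
  have hk : k ≤ N := Nat.lt_succ_iff.mp (mem_range.mp hk)
  rw [Nat.add_sub_cancel, Nat.add_sub_add_right, show N + 1 - k - 1 = N - k by omega,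
    Nat.cast_sub (by omega)]
  push_cast
  ring

lemma choose_mul_choose_shift_sum (N k : ℕ) (hk : k ≤ N) :
    ((k : ℝ) + 1) * (N.choose (k + 1) * N.choose (N + 1 - (k + 1))) +
      ((N : ℝ) + 1 - k) * (N.choose k * N.choose (N + 1 - k)) = N * N.choose k ^ 2 := by
  obtain ⟨j, rfl⟩ := Nat.exists_eq_add_of_le hk
  have h₁ : ((k + j).choose (k + 1) : ℝ) * (k + 1) = (k + j).choose k * j := by
    exact_mod_cast (Nat.choose_succ_right_eq (k + j) k).trans (by rw [Nat.add_sub_cancel_left])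
  have h₂ : ((k + j).choose (j + 1) : ℝ) * (j + 1) = (k + j).choose k * k := by
    have := Nat.choose_succ_right_eq (k + j) j
    rw [Nat.add_sub_cancel, ← Nat.choose_symm_add] at this
    exact_mod_cast this
  rw [show k + j + 1 - (k + 1) = j by omega, show k + j + 1 - k = j + 1 by omega,
    Nat.choose_symm_of_eq_add (Nat.add_comm k j)]
  push_cast
  linear_combination ((k + j).choose k : ℝ) * (h₁ + h₂)

lemma jacobiP_eq_binaryForm (n : ℕ) (α β ζ : ℝ) :
    jacobiP n α β ζ = binaryForm (fun k => genBinom (n + α) (n - k) * genBinom (n + β) k) n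
      ((ζ - 1) / 2) ((ζ + 1) / 2) := rfl

lemma jacobiP_zero_zero (n : ℕ) (ζ : ℝ) :
    jacobiP n 0 0 ζ = binaryForm (fun k => n.choose k ^ 2) n ((ζ - 1) / 2) ((ζ + 1) / 2) := by
  refine (jacobiP_eq_binaryForm n 0 0 ζ).trans (binaryForm_congr (fun k hk => ?_) _ _)
  rw [add_zero, genBinom_natCast, genBinom_natCast, Nat.choose_symm hk, sq]

/-- `(m + 1).choose (m + 2 - k)` is `(m + 1).choose (k - 1)` for `1 ≤ k`, and vanishes at
`k = 0` where the truncated `k - 1` would not. -/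
lemma K1_add_two_eq_binaryForm (m : ℕ) (ζ : ℝ) :
    K1 (m + 2) ζ = binaryForm (fun k => (m + 1).choose k * (m + 1).choose (m + 1 + 1 - k)) (m + 2)
      ((ζ - 1) / 2) ((ζ + 1) / 2) := by
  rw [← mul_mul_binaryForm (by simp) (by simp)]
  have hcoeff : ∀ k ≤ m, genBinom (m + 1) (m - k) * genBinom (m + 1) k =
      (m + 1).choose (k + 1) * (m + 1).choose (m + 1 + 1 - (k + 1)) := fun k hk => by
    rw [← Nat.cast_add_one, genBinom_natCast, genBinom_natCast, Nat.add_sub_add_right,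
      Nat.choose_symm_of_eq_add (by omega : m + 1 = m - k + (k + 1)), Nat.choose_symm (by omega)]
  show (ζ ^ 2 - 1) / 4 * jacobiP m 1 1 ζ = _
  rw [jacobiP_eq_binaryForm, binaryForm_congr hcoeff]
  ring

/-- For every integer `n ≥ 2` and every `ζ ∈ ℝ`,
`(K_n^{−1,−1})'(ζ) = ((n−1)/2)·J_{n−1}^{0,0}(ζ)`. -/
theorem K1_deriv_eq (n : ℕ) (hn : 2 ≤ n) (ζ : ℝ) :
    deriv (K1 n) ζ = (((n : ℝ) - 1) / 2) * jacobiP (n - 1) 0 0 ζ := by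
  obtain ⟨m, rfl⟩ := Nat.exists_eq_add_of_le' hn
  have hu : HasDerivAt (fun x : ℝ => (x - 1) / 2) (1 / 2) ζ :=
    ((hasDerivAt_id ζ).sub_const 1).div_const 2
  have hv : HasDerivAt (fun x : ℝ => (x + 1) / 2) (1 / 2) ζ :=
    ((hasDerivAt_id ζ).add_const 1).div_const 2
  rw [funext (K1_add_two_eq_binaryForm m), (hasDerivAt_binaryForm _ (m + 1) hu hv).deriv,
    binaryForm_congr (fun k hk => choose_mul_choose_shift_sum (m + 1) k hk), binaryForm_const_mul,
    show m + 2 - 1 = m + 1 from rfl, jacobiP_zero_zero]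
  push_cast
  ring
end

section
/- For every integer n ≥ 4 and every ζ ∈ ℝ, the derivative of the generalized Jacobi polynomial of index (−2,−2) satisfies (K_n^{−2,−2})'(ζ) = ((n−3)/2)·K_{n−1}^{−1,−1}(ζ). -/
open scoped BigOperators

/-- Generalized Jacobi polynomial of index `(−2,−2)`. -/
noncomputable def K2 : ℕ → ℝ → ℝ
  | 0, ζ => (1 - ζ) ^ 2 * (2 + ζ) / 4
  | 1, ζ => (1 - ζ) ^ 2 * (1 + ζ) / 4
  | 2, ζ => (1 + ζ) ^ 2 * (2 - ζ) / 4
  | 3, ζ => (1 + ζ) ^ 2 * (ζ - 1) / 4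
  | (n + 4), ζ => ((ζ ^ 2 - 1) / 4) ^ 2 * jacobiP n 2 2 ζ

/-!
Write `u = (ζ - 1) / 2` and `v = (ζ + 1) / 2`, so that `u v = (ζ² - 1) / 4` and `u' = v' = 1/2`.
For a natural parameter `a`, `J_m^{a,a} = ∑_{i+j=m} C(m+a, i) C(m+a, j) u^i v^j`, and multiplying
by `(u v)^a` merely extends this sum to `i + j = m + 2a`, the new terms having a vanishing binomial
coefficient. Hence, with `S_M(N) = ∑_{i+j=N} C(M, i) C(M, j) u^i v^j` (that is,
`binomConv M N u v`), we get `K_n^{-2,-2} = S_{n-2}(n)` and `K_{n-1}^{-1,-1} = S_{n-2}(n-1)`.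
Differentiating `S_M(N+1)` termwise and using the absorption identity
`(i+1) C(M, i+1) = (M - i) C(M, i)` gives `S_M(N+1)' = ((2M - N) / 2) S_M(N)`, which for
`M = n - 2`, `N = n - 1` is the claim.
-/

open Finset

lemma Nat.cast_choose_succ_mul {R : Type*} [Ring R] (M i : ℕ) :
    (M.choose (i + 1) : R) * (i + 1) = M.choose i * (M - i) := by
  rcases le_or_gt i M with h | h
  · rw [← Nat.cast_sub h]
    exact_mod_cast congrArg (Nat.cast : ℕ → R) (Nat.choose_succ_right_eq M i)
  · simp [Nat.choose_eq_zero_of_lt h, Nat.choose_eq_zero_of_lt (Nat.lt_succ_of_lt h)]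

theorem Finset.Nat.sum_antidiagonal_add_add {M : Type*} [AddCommMonoid M] (f : ℕ × ℕ → M)
    (N a : ℕ) (hf : ∀ p ∈ antidiagonal (N + 2 * a), p.1 < a ∨ p.2 < a → f p = 0) :
    ∑ p ∈ antidiagonal (N + 2 * a), f p = ∑ p ∈ antidiagonal N, f (p.1 + a, p.2 + a) := by
  let shift : ℕ × ℕ ↪ ℕ × ℕ :=
    (addRightEmbedding a).prodMap (addRightEmbedding a)
  refine ((sum_subset ?_ fun p hp hp' => hf p hp ?_).symm.trans (sum_map (antidiagonal N) shift f))
  · simp only [subset_iff, mem_map, HasAntidiagonal.mem_antidiagonal]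
    rintro _ ⟨p, hp, rfl⟩
    simp only [shift, Function.Embedding.coe_prodMap, addRightEmbedding_apply, Prod.map_fst,
      Prod.map_snd]
    omega
  · by_contra! h
    refine hp' (mem_map.2 ⟨(p.1 - a, p.2 - a), ?_, ?_⟩)
    · simp only [HasAntidiagonal.mem_antidiagonal] at hp ⊢; omega
    · ext <;> simp [shift] <;> omega

section CommRing

variable {R : Type*} [CommRing R]

/-- The coefficient of `t ^ N` in `(1 + x t) ^ M * (1 + y t) ^ M`. -/
def binomConv (M N : ℕ) (x y : R) : R :=
  ∑ p ∈ antidiagonal N, (M.choose p.1 * M.choose p.2 : R) * x ^ p.1 * y ^ p.2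

lemma binomConv_add_two_mul (N a : ℕ) (x y : R) :
    binomConv (N + a) (N + 2 * a) x y = (x * y) ^ a * binomConv (N + a) N x y := by
  rw [binomConv, Finset.Nat.sum_antidiagonal_add_add, binomConv, mul_sum]
  · refine sum_congr rfl fun p hp => ?_
    rw [HasAntidiagonal.mem_antidiagonal] at hp
    rw [Nat.choose_symm_of_eq_add (show N + a = p.1 + a + p.2 by omega),
      Nat.choose_symm_of_eq_add (show N + a = p.2 + a + p.1 by omega)]
    ring
  · intro p hp hlt
    rw [HasAntidiagonal.mem_antidiagonal] at hp
    rcases hlt with h | h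
    · simp [Nat.choose_eq_zero_of_lt (show N + a < p.2 by omega)]
    · simp [Nat.choose_eq_zero_of_lt (show N + a < p.1 by omega)]

lemma sum_partialDeriv_binomConv_succ (M N : ℕ) (x y : R) :
    ∑ p ∈ antidiagonal (N + 1), (M.choose p.1 * M.choose p.2 : R) *
        (p.1 * x ^ (p.1 - 1) * y ^ p.2 + x ^ p.1 * (p.2 * y ^ (p.2 - 1))) =
      (2 * M - N) * binomConv M N x y := by
  simp only [mul_add, sum_add_distrib]
  rw [Finset.Nat.sum_antidiagonal_succ, Finset.Nat.sum_antidiagonal_succ']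
  simp only [Nat.cast_zero, zero_mul, mul_zero, zero_add, add_tsub_cancel_right]
  rw [binomConv, mul_sum, ← sum_add_distrib]
  refine sum_congr rfl fun p hp => ?_
  have hN : (p.1 : R) + p.2 = N := by rw [← Nat.cast_add, HasAntidiagonal.mem_antidiagonal.1 hp]
  push_cast
  linear_combination (x ^ p.1 * y ^ p.2) *
    ((M.choose p.2 : R) * Nat.cast_choose_succ_mul (R := R) M p.1 +
      (M.choose p.1 : R) * Nat.cast_choose_succ_mul (R := R) M p.2 -
      (M.choose p.1 * M.choose p.2 : R) * hN)

end CommRing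

theorem hasDerivAt_binomConv (M N : ℕ) (ζ : ℝ) :
    HasDerivAt (fun z => binomConv M (N + 1) ((z - 1) / 2) ((z + 1) / 2))
      ((2 * M - N) / 2 * binomConv M N ((ζ - 1) / 2) ((ζ + 1) / 2)) ζ := by
  have hx : HasDerivAt (fun z : ℝ => (z - 1) / 2) (1 / 2) ζ :=
    ((hasDerivAt_id ζ).sub_const 1).div_const 2
  have hy : HasDerivAt (fun z : ℝ => (z + 1) / 2) (1 / 2) ζ :=
    ((hasDerivAt_id ζ).add_const 1).div_const 2
  have hterm (p : ℕ × ℕ) : HasDerivAt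
      (fun z => (M.choose p.1 * M.choose p.2 : ℝ) * ((z - 1) / 2) ^ p.1 * ((z + 1) / 2) ^ p.2)
      ((M.choose p.1 * M.choose p.2 : ℝ) *
        (p.1 * ((ζ - 1) / 2) ^ (p.1 - 1) * ((ζ + 1) / 2) ^ p.2 +
          ((ζ - 1) / 2) ^ p.1 * (p.2 * ((ζ + 1) / 2) ^ (p.2 - 1))) / 2) ζ :=
    (((hx.fun_pow p.1).const_mul _).fun_mul (hy.fun_pow p.2)).congr_deriv (by ring)
  refine (HasDerivAt.fun_sum fun p _ => hterm p).congr_deriv ?_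
  rw [← sum_div, sum_partialDeriv_binomConv_succ]
  ring

lemma jacobiP_natCast_eq_binomConv (m a : ℕ) (ζ : ℝ) :
    jacobiP m a a ζ = binomConv (m + a) m ((ζ - 1) / 2) ((ζ + 1) / 2) := by
  rw [jacobiP, binomConv, Finset.Nat.sum_antidiagonal_eq_sum_range_succ_mk]
  refine sum_congr rfl fun k _ => ?_
  rw [← Nat.cast_add, genBinom_natCast, genBinom_natCast]
  dsimp only
  ring

lemma K2_add_four (m : ℕ) :
    K2 (m + 4) = fun ζ => binomConv (m + 2) (m + 4) ((ζ - 1) / 2) ((ζ + 1) / 2) := by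
  funext ζ
  rw [K2, show jacobiP m 2 2 ζ = jacobiP m (2 : ℕ) (2 : ℕ) ζ by norm_num,
    jacobiP_natCast_eq_binomConv,
    show m + 4 = m + 2 * 2 by rfl, binomConv_add_two_mul]
  ring

lemma K1_add_two (m : ℕ) (ζ : ℝ) :
    K1 (m + 2) ζ = binomConv (m + 1) (m + 2) ((ζ - 1) / 2) ((ζ + 1) / 2) := by
  rw [K1, show jacobiP m 1 1 ζ = jacobiP m (1 : ℕ) (1 : ℕ) ζ by norm_num,
    jacobiP_natCast_eq_binomConv,
    show m + 2 = m + 2 * 1 by rfl, binomConv_add_two_mul]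
  ring

/-- For every integer `n ≥ 4` and every `ζ ∈ ℝ`,
`(K_n^{−2,−2})'(ζ) = ((n−3)/2)·K_{n−1}^{−1,−1}(ζ)`. -/
theorem K2_deriv_eq (n : ℕ) (hn : 4 ≤ n) (ζ : ℝ) :
    deriv (K2 n) ζ = (((n : ℝ) - 3) / 2) * K1 (n - 1) ζ := by
  obtain ⟨m, rfl⟩ := Nat.exists_eq_add_of_le' hn
  rw [K2_add_four, (hasDerivAt_binomConv (m + 2) (m + 3) ζ).deriv,
    show m + 4 - 1 = m + 1 + 2 by omega, K1_add_two]
  push_cast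
  ring
end

section
/- For every integer n ≥ 2 and every ζ ∈ ℝ, K_n^{−1,−1}(ζ) = ((n−1)/(2(2n−1)))·(J_n^{0,0}(ζ) − J_{n−2}^{0,0}(ζ)), where J_n^{0,0} is the n-th Legendre polynomial. -/
open scoped BigOperators

lemma prod_cast_descFactorial (N k : ℕ) :
    (∏ i ∈ Finset.range k, ((N : ℝ) - (i : ℝ))) = (N.descFactorial k : ℝ) := by
  rcases le_or_gt k N with h | h
  · rw [Nat.descFactorial_eq_prod_range, Nat.cast_prod]
    refine Finset.prod_congr rfl fun i hi => ?_
    rw [Nat.cast_sub (by simp at hi; omega)]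
  · rw [Nat.descFactorial_eq_zero_iff_lt.2 h, Nat.cast_zero]
    exact Finset.prod_eq_zero (Finset.mem_range.2 h) (by simp)

lemma genBinom_nat (N k : ℕ) : genBinom (N : ℝ) k = (N.choose k : ℝ) := by
  unfold genBinom
  rw [prod_cast_descFactorial, Nat.descFactorial_eq_factorial_mul_choose, Nat.cast_mul,
    mul_comm, mul_div_assoc, div_self (by exact_mod_cast k.factorial_ne_zero), mul_one]

lemma xyz_identity (m i : ℕ) :
    (m : ℝ) * (m.choose (i+1) : ℝ)^2 =
      (m.choose i : ℝ) * (m.choose (i+1) : ℝ) + (m.choose (i+1) : ℝ) * (m.choose (i+2) : ℝ)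
        + ((m : ℝ) + 2) * (m.choose i : ℝ) * (m.choose (i+2) : ℝ) := by
  rcases lt_or_ge i m with h | h
  · have h1 : ((i : ℝ) + 1) * (m.choose (i+1) : ℝ) = ((m : ℝ) - i) * (m.choose i : ℝ) := by
      have := Nat.choose_succ_right_eq m i
      have hc : ((m.choose (i+1) * (i+1) : ℕ) : ℝ) = ((m.choose i * (m - i) : ℕ) : ℝ) := by
        rw [this]
      push_cast [Nat.cast_sub h.le] at hc
      linarith
    have h2 : ((i : ℝ) + 2) * (m.choose (i+2) : ℝ) = ((m : ℝ) - i - 1) * (m.choose (i+1) : ℝ) := by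
      have := Nat.choose_succ_right_eq m (i+1)
      have hc : ((m.choose (i+2) * (i+2) : ℕ) : ℝ) = ((m.choose (i+1) * (m - (i+1)) : ℕ) : ℝ) := by
        exact_mod_cast this
      push_cast [Nat.cast_sub (by omega : i + 1 ≤ m)] at hc
      linarith
    have hmi : ((m : ℝ) - i) ≠ 0 := by
      have : (i : ℝ) < m := by exact_mod_cast h
      linarith
    have hi2 : ((i : ℝ) + 2) ≠ 0 := by positivity
    have hx : (m.choose i : ℝ) = ((i : ℝ) + 1) * (m.choose (i+1) : ℝ) / ((m : ℝ) - i) := by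
      field_simp; linarith [h1]
    have hz : (m.choose (i+2) : ℝ) = ((m : ℝ) - i - 1) * (m.choose (i+1) : ℝ) / ((i : ℝ) + 2) := by
      field_simp; linarith [h2]
    rw [hx, hz]
    field_simp
    ring
  · have hy : m.choose (i+1) = 0 := Nat.choose_eq_zero_of_lt (by omega)
    have hz : m.choose (i+2) = 0 := Nat.choose_eq_zero_of_lt (by omega)
    simp [hy, hz]

lemma chooseId (m i : ℕ) :
    2 * (2 * (m : ℝ) + 3) * (((m+1).choose (i+1) : ℝ) * ((m+1).choose (i+2) : ℝ)) =
      ((m : ℝ) + 1) * (((m+2).choose (i+2) : ℝ)^2 - (m.choose (i+2) : ℝ)^2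
        + 2 * (m.choose (i+1) : ℝ)^2 - (m.choose i : ℝ)^2) := by
  have p1 : ((m+1).choose (i+1) : ℝ) = (m.choose i : ℝ) + (m.choose (i+1) : ℝ) := by
    rw [Nat.choose_succ_succ]; push_cast; ring
  have p2 : ((m+1).choose (i+2) : ℝ) = (m.choose (i+1) : ℝ) + (m.choose (i+2) : ℝ) := by
    rw [Nat.choose_succ_succ]; push_cast; ring
  have p3 : ((m+2).choose (i+2) : ℝ) = ((m+1).choose (i+1) : ℝ) + ((m+1).choose (i+2) : ℝ) := by
    rw [Nat.choose_succ_succ]; push_cast; ring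
  rw [p3, p1, p2]
  linear_combination (-2 : ℝ) * xyz_identity m i


lemma key_sum (m : ℕ) (u v : ℝ) (huv : v = u + 1) :
    2 * (2 * (m : ℝ) + 3) *
        (u * v * ∑ k ∈ Finset.range (m + 1),
          ((m+1).choose (m - k) : ℝ) * ((m+1).choose k : ℝ) * u ^ k * v ^ (m - k))
      = ((m : ℝ) + 1) *
        ((∑ k ∈ Finset.range (m + 2 + 1),
            ((m+2).choose (m + 2 - k) : ℝ) * ((m+2).choose k : ℝ) * u ^ k * v ^ (m + 2 - k))
          - ∑ k ∈ Finset.range (m + 1),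
            (m.choose (m - k) : ℝ) * (m.choose k : ℝ) * u ^ k * v ^ (m - k)) := by
  have hvu : v - u = 1 := by rw [huv]; ring
  have hsq : (v - u) ^ 2 = 1 := by rw [hvu]; norm_num
  -- the shifted left sum
  have hL : u * v * (∑ k ∈ Finset.range (m + 1),
        ((m+1).choose (m - k) : ℝ) * ((m+1).choose k : ℝ) * u ^ k * v ^ (m - k))
      = ∑ k ∈ Finset.range (m + 1),
        ((m+1).choose (m - k) : ℝ) * ((m+1).choose k : ℝ) * u ^ (k+1) * v ^ (m + 1 - k) := by
    rw [Finset.mul_sum]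
    refine Finset.sum_congr rfl fun k hk => ?_
    have hk' : k ≤ m := by simpa [Nat.lt_succ_iff] using hk
    rw [show m + 1 - k = (m - k) + 1 by omega]
    ring
  -- expand the degree-m sum using (v-u)^2 = 1
  have hS0 : (∑ k ∈ Finset.range (m + 1),
        (m.choose (m - k) : ℝ) * (m.choose k : ℝ) * u ^ k * v ^ (m - k))
      = (∑ k ∈ Finset.range (m + 1), (m.choose k : ℝ)^2 * u ^ k * v ^ (m + 2 - k))
        - 2 * (∑ k ∈ Finset.range (m + 1), (m.choose k : ℝ)^2 * u ^ (k+1) * v ^ (m + 1 - k))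
        + (∑ k ∈ Finset.range (m + 1), (m.choose k : ℝ)^2 * u ^ (k+2) * v ^ (m - k)) := by
    rw [Finset.mul_sum, ← Finset.sum_sub_distrib, ← Finset.sum_add_distrib]
    refine Finset.sum_congr rfl fun k hk => ?_
    have hk' : k ≤ m := by simpa [Nat.lt_succ_iff] using hk
    have hsym : (m.choose (m - k) : ℝ) = (m.choose k : ℝ) := by
      exact_mod_cast congrArg (fun t : ℕ => (t : ℝ)) (Nat.choose_symm hk')
    rw [hsym, show m + 2 - k = (m - k) + 2 by omega, show m + 1 - k = (m - k) + 1 by omega]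
    linear_combination (-((m.choose k : ℝ)^2 * u ^ k * v ^ (m - k))) * hsq
  -- peel the degree-(m+2) sum
  have hS2 : (∑ k ∈ Finset.range (m + 2 + 1),
        ((m+2).choose (m + 2 - k) : ℝ) * ((m+2).choose k : ℝ) * u ^ k * v ^ (m + 2 - k))
      = (∑ k ∈ Finset.range (m + 1),
          ((m+2).choose (k+1) : ℝ)^2 * u ^ (k+1) * v ^ (m + 1 - k)) + u ^ (m+2) + v ^ (m+2) := by
    rw [Finset.sum_range_succ' _ (m + 2), Finset.sum_range_succ]
    have hbody : ∀ k ∈ Finset.range (m + 1),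
        ((m+2).choose (m + 2 - (k+1)) : ℝ) * ((m+2).choose (k+1) : ℝ) * u ^ (k+1) * v ^ (m + 2 - (k+1))
          = ((m+2).choose (k+1) : ℝ)^2 * u ^ (k+1) * v ^ (m + 1 - k) := by
      intro k hk
      have hk' : k ≤ m := by simpa [Nat.lt_succ_iff] using hk
      have hsym : ((m+2).choose (m + 2 - (k+1)) : ℝ) = ((m+2).choose (k+1) : ℝ) := by
        exact_mod_cast congrArg (fun t : ℕ => (t : ℝ)) (Nat.choose_symm (show k+1 ≤ m+2 by omega))
      rw [hsym, show m + 2 - (k+1) = m + 1 - k by omega]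
      ring
    rw [Finset.sum_congr rfl hbody]
    simp [Nat.sub_self]
  -- peel/shift the v^(m+2-k) part of the degree-m expansion
  have hP1 : (∑ k ∈ Finset.range (m + 1), (m.choose k : ℝ)^2 * u ^ k * v ^ (m + 2 - k))
      = (∑ k ∈ Finset.range (m + 1),
          (m.choose (k+1) : ℝ)^2 * u ^ (k+1) * v ^ (m + 1 - k)) + v ^ (m+2) := by
    rw [Finset.sum_range_succ' _ m]
    conv_rhs => rw [Finset.sum_range_succ]
    have hbody : ∀ k ∈ Finset.range m,
        (m.choose (k+1) : ℝ)^2 * u ^ (k+1) * v ^ (m + 2 - (k+1))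
          = (m.choose (k+1) : ℝ)^2 * u ^ (k+1) * v ^ (m + 1 - k) := by
      intro k hk
      rw [show m + 2 - (k+1) = m + 1 - k by omega]
    rw [Finset.sum_congr rfl hbody]
    simp [Nat.choose_succ_self]
  -- peel the top of the u^(k+2) part
  have hP3 : (∑ k ∈ Finset.range (m + 1), (m.choose k : ℝ)^2 * u ^ (k+2) * v ^ (m - k))
      = (∑ k ∈ Finset.range m, (m.choose k : ℝ)^2 * u ^ (k+2) * v ^ (m - k)) + u ^ (m+2) := by
    rw [Finset.sum_range_succ]
    simp [Nat.sub_self]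
  -- peel bottoms of the shifted sums
  have hSLp : (∑ k ∈ Finset.range (m + 1),
        ((m+1).choose (m - k) : ℝ) * ((m+1).choose k : ℝ) * u ^ (k+1) * v ^ (m + 1 - k))
      = (∑ k ∈ Finset.range m,
          ((m+1).choose (k+2) : ℝ) * ((m+1).choose (k+1) : ℝ) * u ^ (k+2) * v ^ (m - k))
        + ((m : ℝ) + 1) * (u * v ^ (m+1)) := by
    rw [Finset.sum_range_succ' _ m]
    have hbody : ∀ k ∈ Finset.range m,
        ((m+1).choose (m - (k+1)) : ℝ) * ((m+1).choose (k+1) : ℝ) * u ^ (k+1+1) * v ^ (m + 1 - (k+1))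
          = ((m+1).choose (k+2) : ℝ) * ((m+1).choose (k+1) : ℝ) * u ^ (k+2) * v ^ (m - k) := by
      intro k hk
      have hk' : k < m := Finset.mem_range.1 hk
      have hsym : ((m+1).choose (m - (k+1)) : ℝ) = ((m+1).choose (k+2) : ℝ) := by
        have h := Nat.choose_symm (show k+2 ≤ m+1 by omega)
        rw [show m + 1 - (k+2) = m - (k+1) by omega] at h
        exact_mod_cast congrArg (fun t : ℕ => (t : ℝ)) h
      rw [hsym, show m + 1 - (k+1) = m - k by omega, show k+1+1 = k+2 by omega]
    rw [Finset.sum_congr rfl hbody]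
    have hch : ((m+1).choose m : ℝ) = (m : ℝ) + 1 := by
      exact_mod_cast congrArg (fun t : ℕ => (t : ℝ)) (Nat.choose_succ_self_right m)
    simp [hch]
    ring
  have hSBp : (∑ k ∈ Finset.range (m + 1),
        ((m+2).choose (k+1) : ℝ)^2 * u ^ (k+1) * v ^ (m + 1 - k))
      = (∑ k ∈ Finset.range m, ((m+2).choose (k+2) : ℝ)^2 * u ^ (k+2) * v ^ (m - k))
        + ((m : ℝ) + 2)^2 * (u * v ^ (m+1)) := by
    rw [Finset.sum_range_succ' _ m]
    have hbody : ∀ k ∈ Finset.range m,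
        ((m+2).choose (k+1+1) : ℝ)^2 * u ^ (k+1+1) * v ^ (m + 1 - (k+1))
          = ((m+2).choose (k+2) : ℝ)^2 * u ^ (k+2) * v ^ (m - k) := by
      intro k hk
      rw [show m + 1 - (k+1) = m - k by omega, show k+1+1 = k+2 by omega]
    rw [Finset.sum_congr rfl hbody]
    have hch : ((m+2).choose 1 : ℝ) = (m : ℝ) + 2 := by
      exact_mod_cast congrArg (fun t : ℕ => (t : ℝ)) (Nat.choose_one_right (m+2))
    simp [hch]
    ring
  have hSB0p : (∑ k ∈ Finset.range (m + 1),
        (m.choose (k+1) : ℝ)^2 * u ^ (k+1) * v ^ (m + 1 - k))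
      = (∑ k ∈ Finset.range m, (m.choose (k+2) : ℝ)^2 * u ^ (k+2) * v ^ (m - k))
        + ((m : ℝ))^2 * (u * v ^ (m+1)) := by
    rw [Finset.sum_range_succ' _ m]
    have hbody : ∀ k ∈ Finset.range m,
        (m.choose (k+1+1) : ℝ)^2 * u ^ (k+1+1) * v ^ (m + 1 - (k+1))
          = (m.choose (k+2) : ℝ)^2 * u ^ (k+2) * v ^ (m - k) := by
      intro k hk
      rw [show m + 1 - (k+1) = m - k by omega, show k+1+1 = k+2 by omega]
    rw [Finset.sum_congr rfl hbody]
    have hch : (m.choose 1 : ℝ) = (m : ℝ) := by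
      exact_mod_cast congrArg (fun t : ℕ => (t : ℝ)) (Nat.choose_one_right m)
    simp [hch]
    ring
  have hSCp : (∑ k ∈ Finset.range (m + 1),
        (m.choose k : ℝ)^2 * u ^ (k+1) * v ^ (m + 1 - k))
      = (∑ k ∈ Finset.range m, (m.choose (k+1) : ℝ)^2 * u ^ (k+2) * v ^ (m - k))
        + u * v ^ (m+1) := by
    rw [Finset.sum_range_succ' _ m]
    have hbody : ∀ k ∈ Finset.range m,
        (m.choose (k+1) : ℝ)^2 * u ^ (k+1+1) * v ^ (m + 1 - (k+1))
          = (m.choose (k+1) : ℝ)^2 * u ^ (k+2) * v ^ (m - k) := by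
      intro k hk
      rw [show m + 1 - (k+1) = m - k by omega, show k+1+1 = k+2 by omega]
    rw [Finset.sum_congr rfl hbody]
    simp
  -- the core identity on the interior sums
  have hfin : 2 * (2 * (m : ℝ) + 3) *
        (∑ k ∈ Finset.range m,
          ((m+1).choose (k+2) : ℝ) * ((m+1).choose (k+1) : ℝ) * u ^ (k+2) * v ^ (m - k))
      = ((m : ℝ) + 1) *
        ((∑ k ∈ Finset.range m, ((m+2).choose (k+2) : ℝ)^2 * u ^ (k+2) * v ^ (m - k))
          - (∑ k ∈ Finset.range m, (m.choose (k+2) : ℝ)^2 * u ^ (k+2) * v ^ (m - k))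
          + 2 * (∑ k ∈ Finset.range m, (m.choose (k+1) : ℝ)^2 * u ^ (k+2) * v ^ (m - k))
          - (∑ k ∈ Finset.range m, (m.choose k : ℝ)^2 * u ^ (k+2) * v ^ (m - k))) := by
    rw [Finset.mul_sum, Finset.mul_sum, ← Finset.sum_sub_distrib, ← Finset.sum_add_distrib,
      ← Finset.sum_sub_distrib, Finset.mul_sum]
    refine Finset.sum_congr rfl fun k hk => ?_
    linear_combination (u ^ (k+2) * v ^ (m - k)) * chooseId m k
  rw [hL, hS0, hS2, hP1, hP3, hSLp, hSBp, hSB0p, hSCp]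
  linear_combination hfin

/-- For every integer `n ≥ 2` and every `ζ ∈ ℝ`,
`K_n^{−1,−1}(ζ) = ((n−1)/(2(2n−1)))·(J_n^{0,0}(ζ) − J_{n−2}^{0,0}(ζ))`. -/
theorem K1_eq_legendre_difference (n : ℕ) (hn : 2 ≤ n) (ζ : ℝ) :
    K1 n ζ = (((n : ℝ) - 1) / (2 * (2 * (n : ℝ) - 1))) *
      (jacobiP n 0 0 ζ - jacobiP (n - 2) 0 0 ζ) := by
  obtain ⟨m, rfl⟩ : ∃ m, n = m + 2 := ⟨n - 2, by omega⟩
  have hJ11 : jacobiP m 1 1 ζ = ∑ k ∈ Finset.range (m + 1),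
      ((m+1).choose (m - k) : ℝ) * ((m+1).choose k : ℝ) * ((ζ-1)/2) ^ k * ((ζ+1)/2) ^ (m - k) := by
    unfold jacobiP
    refine Finset.sum_congr rfl fun k _ => ?_
    rw [show (m:ℝ) + 1 = ((m+1 : ℕ) : ℝ) by push_cast; ring, genBinom_nat, genBinom_nat]
  have hJ00 : ∀ N : ℕ, jacobiP N 0 0 ζ = ∑ k ∈ Finset.range (N + 1),
      (N.choose (N - k) : ℝ) * (N.choose k : ℝ) * ((ζ-1)/2) ^ k * ((ζ+1)/2) ^ (N - k) := by
    intro N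
    unfold jacobiP
    refine Finset.sum_congr rfl fun k _ => ?_
    rw [add_zero, genBinom_nat, genBinom_nat]
  have hK := key_sum m ((ζ-1)/2) ((ζ+1)/2) (by ring)
  simp only [K1, show m + 2 - 2 = m by omega]
  rw [hJ11, hJ00 (m+2), hJ00 m]
  have hden : (2 * (2 * ((m:ℝ) + 2) - 1)) ≠ 0 := by
    have : (0:ℝ) ≤ (m:ℝ) := Nat.cast_nonneg m
    nlinarith
  push_cast
  rw [div_mul_eq_mul_div ((m:ℝ) + 2 - 1), eq_div_iff hden]
  linear_combination hK
end

section
/- Define q̂_{m,n}(x̂,ŷ) = ((K_m^{−2,−2})'(x̂)·K_n^{−2,−2}(ŷ), 0) on ℝ². Then: (i) for all integers m, n ≥ 0, the scalar curl satisfies ∇×q̂_{m,n}(x̂,ŷ) = −(K_m^{−2,−2})'(x̂)·(K_n^{−2,−2})'(ŷ); (ii) if m ≥ 1 and n ∈ {1, 3} ∪ {k : k ≥ 4}, then the first component of q̂_{m,n} vanishes whenever ŷ = −1 or ŷ = 1 (and the second component is identically zero), so the tangential trace of q̂_{m,n} vanishes on all four edges of [−1,1]²; (iii) if m, n ∈ {2}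 ∪ {k : k ≥ 4}, then ∇×q̂_{m,n}(x̂,ŷ) = 0 whenever x̂ ∈ {−1, 1} or ŷ ∈ {−1, 1}; (iv) if m = 1 and n ∈ {2} ∪ {k : k ≥ 4}, then ∇×q̂_{1,n}(−1,ŷ) = −(K_n^{−2,−2})'(ŷ) for all ŷ, ∇×q̂_{1,n}(1,ŷ) = 0 for all ŷ, and ∇×q̂_{1,n}(x̂,±1) = 0 for all x̂. -/
open scoped BigOperators

/-- Scalar curl of a planar vector field: `∇×u = ∂u₂/∂x̂ − ∂u₁/∂ŷ`. -/
noncomputable def scurl (u : ℝ × ℝ → ℝ × ℝ) (z : ℝ × ℝ) : ℝ :=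
  deriv (fun t => (u (t, z.2)).2) z.1 - deriv (fun t => (u (z.1, t)).1) z.2

/-- `q̂_{m,n}(x̂,ŷ) = ((K_m^{−2,−2})'(x̂)·K_n^{−2,−2}(ŷ), 0)`. -/
noncomputable def qHat (m n : ℕ) (z : ℝ × ℝ) : ℝ × ℝ :=
  (deriv (K2 m) z.1 * K2 n z.2, 0)

/-! Everything reduces to the product structure `q̂ = (K_m' ⊗ K_n, 0)`, whose curl is
`-K_m' ⊗ K_n'`, together with the boundary behaviour of the factors: `K_n` vanishes at `±1`
for `n = 1, 3` and `n ≥ 4`, and `K_n'` vanishes at `±1` for `n = 2` and `n ≥ 4`, the latter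
because `K_{n+4}` carries the double root factor `((ζ² - 1)/4)²`. -/

lemma differentiable_jacobiP (n : ℕ) (α β : ℝ) : Differentiable ℝ (jacobiP n α β) := by
  unfold jacobiP
  fun_prop

lemma differentiable_K2 : ∀ n : ℕ, Differentiable ℝ (K2 n)
  | 0 | 1 | 2 | 3 => by unfold K2; fun_prop
  | n + 4 => by unfold K2; have := differentiable_jacobiP n 2 2; fun_prop

lemma scurl_qHat (m n : ℕ) (z : ℝ × ℝ) :
    scurl (qHat m n) z = -(deriv (K2 m) z.1 * deriv (K2 n) z.2) := by
  unfold scurl qHat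
  simp only
  rw [deriv_const, deriv_const_mul _ ((differentiable_K2 n).differentiableAt)]
  ring

lemma hasDerivAt_sq_mul_of_eq_zero {p g : ℝ → ℝ} {a p' g' : ℝ} (hp : HasDerivAt p p' a)
    (hg : HasDerivAt g g' a) (ha : p a = 0) : HasDerivAt (fun x => p x ^ 2 * g x) 0 a := by
  simpa [ha] using (hp.pow 2).fun_mul hg

lemma deriv_K2_one (a : ℝ) : deriv (K2 1) a = -((1 - a) * (1 + 3 * a)) / 4 := by
  have h : HasDerivAt (fun ζ : ℝ => (1 - ζ) ^ 2 * (1 + ζ) / 4)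
      ((2 * (1 - a) ^ 1 * (-1) * (1 + a) + (1 - a) ^ 2 * 1) / 4) a :=
    ((((hasDerivAt_id a).const_sub 1).pow 2).mul ((hasDerivAt_id a).const_add 1)).div_const 4
  unfold K2
  rw [h.deriv]
  ring

lemma deriv_K2_two (a : ℝ) : deriv (K2 2) a = 3 * (1 - a ^ 2) / 4 := by
  have h : HasDerivAt (fun ζ : ℝ => (1 + ζ) ^ 2 * (2 - ζ) / 4)
      ((2 * (1 + a) ^ 1 * 1 * (2 - a) + (1 + a) ^ 2 * (-1)) / 4) a :=
    ((((hasDerivAt_id a).const_add 1).pow 2).mul ((hasDerivAt_id a).const_sub 2)).div_const 4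
  unfold K2
  rw [h.deriv]
  ring

lemma deriv_K2_add_four_of_sq_eq_one (n : ℕ) {a : ℝ} (ha : a ^ 2 = 1) :
    deriv (K2 (n + 4)) a = 0 := by
  have hp : HasDerivAt (fun ζ : ℝ => (ζ ^ 2 - 1) / 4) (2 * a ^ 1 / 4) a :=
    ((hasDerivAt_pow 2 a).sub_const 1).div_const 4
  have hJ := ((differentiable_jacobiP n 2 2).differentiableAt (x := a)).hasDerivAt
  unfold K2
  exact (hasDerivAt_sq_mul_of_eq_zero hp hJ (by simp [ha])).deriv

lemma deriv_K2_of_sq_eq_one {n : ℕ} (hn : n = 2 ∨ 4 ≤ n) {a : ℝ} (ha : a ^ 2 = 1) :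
    deriv (K2 n) a = 0 := by
  obtain rfl | ⟨k, rfl⟩ : n = 2 ∨ ∃ k, n = k + 4 :=
    hn.imp_right fun h => ⟨n - 4, by omega⟩
  · simp [deriv_K2_two, ha]
  · exact deriv_K2_add_four_of_sq_eq_one k ha

lemma K2_of_sq_eq_one {n : ℕ} (hn : n = 1 ∨ n = 3 ∨ 4 ≤ n) {a : ℝ} (ha : a ^ 2 = 1) :
    K2 n a = 0 := by
  obtain rfl | rfl | ⟨k, rfl⟩ : n = 1 ∨ n = 3 ∨ ∃ k, n = k + 4 :=
    hn.imp_right (Or.imp_right fun h => ⟨n - 4, by omega⟩)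
  · have : (1 - a) * (1 + a) = 0 := by linear_combination -ha
    simp only [K2]
    linear_combination (1 - a) * this / 4
  · have : (1 + a) * (a - 1) = 0 := by linear_combination ha
    simp only [K2]
    linear_combination (1 + a) * this / 4
  · simp [K2, ha]

/-- Trace properties of `q̂_{m,n}`:
(i) `∇×q̂_{m,n} = −(K_m^{−2,−2})'(x̂)·(K_n^{−2,−2})'(ŷ)`;
(ii) for `m ≥ 1` and `n ∈ {1,3} ∪ {k ≥ 4}` the tangential trace vanishes on all four edges;
(iii) for `m, n ∈ {2} ∪ {k ≥ 4}` the curl vanishes on all four edges;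
(iv) for `m = 1` and `n ∈ {2} ∪ {k ≥ 4}` the curl trace is `−(K_n^{−2,−2})'(ŷ)` on `x̂ = −1`
and vanishes on the other three edges. -/
theorem qHat_traces :
    (∀ (m n : ℕ) (z : ℝ × ℝ),
      scurl (qHat m n) z = -(deriv (K2 m) z.1 * deriv (K2 n) z.2)) ∧
    (∀ (m n : ℕ), 1 ≤ m → (n = 1 ∨ n = 3 ∨ 4 ≤ n) →
      (∀ xh : ℝ, (qHat m n (xh, -1)).1 = 0 ∧ (qHat m n (xh, 1)).1 = 0) ∧
      (∀ z : ℝ × ℝ, (qHat m n z).2 = 0)) ∧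
    (∀ (m n : ℕ), (m = 2 ∨ 4 ≤ m) → (n = 2 ∨ 4 ≤ n) →
      ∀ z : ℝ × ℝ, (z.1 = -1 ∨ z.1 = 1 ∨ z.2 = -1 ∨ z.2 = 1) → scurl (qHat m n) z = 0) ∧
    (∀ n : ℕ, (n = 2 ∨ 4 ≤ n) →
      (∀ yh : ℝ, scurl (qHat 1 n) (-1, yh) = -(deriv (K2 n) yh)) ∧
      (∀ yh : ℝ, scurl (qHat 1 n) (1, yh) = 0) ∧
      (∀ xh : ℝ, scurl (qHat 1 n) (xh, -1) = 0 ∧ scurl (qHat 1 n) (xh, 1) = 0)) := by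
  refine ⟨scurl_qHat, ?tangential, ?curl, ?curl_one⟩
  case tangential =>
    intro m n _ hn
    refine ⟨fun xh => ?_, fun z => rfl⟩
    simp [qHat, K2_of_sq_eq_one hn (neg_one_sq (R := ℝ)), K2_of_sq_eq_one hn (one_pow 2)]
  case curl =>
    intro m n hm hn z hz
    rw [scurl_qHat, neg_eq_zero, mul_eq_zero]
    rcases or_assoc.2 hz with hx | hy
    · exact .inl (deriv_K2_of_sq_eq_one hm (sq_eq_one_iff.2 hx.symm))
    · exact .inr (deriv_K2_of_sq_eq_one hn (sq_eq_one_iff.2 hy.symm))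
  case curl_one =>
    intro n hn
    refine ⟨fun yh => ?_, fun yh => ?_, fun xh => ⟨?_, ?_⟩⟩ <;>
      simp only [scurl_qHat, deriv_K2_one, deriv_K2_of_sq_eq_one hn (neg_one_sq (R := ℝ)),
        deriv_K2_of_sq_eq_one hn (one_pow 2)] <;> ring
end

section
/- Let P₁,…,P₄ ∈ ℝ² and let J be the Jacobian determinant of the associated bilinear map. For n ∈ {2} ∪ {k : k ≥ 4}, define the curl edge mode ψ̂_{1,n}(x̂,ŷ) = J(x̂,ŷ)·K_1^{−2,−2}(x̂)·(0, (K_n^{−2,−2})'(ŷ)). Then: (i) the first component of ψ̂_{1,n} is identically zero, and the second component vanishes whenever x̂ = −1 or x̂ = 1, so its tangential trace vanishes on all four edges of [−1,1]²; (ii) ∇×ψ̂_{1,n}(−1,ŷ) = J(−1,ŷ)·(K_n^{−2,−2})'(ŷ) for all ŷ; (iii) ∇×ψ̂_{1,n}(1,ŷ) = 0 for all ŷ; (iv) ∇×ψ̂_{1,n}(x̂,±1) = 0 for all x̂. -/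
/-! The first component is identically zero and `K₁^{−2,−2}` vanishes at `x̂ = ±1`, so by the
product rule `∇×ψ̂_{1,n}(±1, ŷ) = J(±1, ŷ) (K₁^{−2,−2})'(±1) (K_n^{−2,−2})'(ŷ)`, with
`(K₁^{−2,−2})'(−1) = 1` and `(K₁^{−2,−2})'(1) = 0`. On the edges `ŷ = ±1` the curl vanishes because
`(K_n^{−2,−2})'(±1) = 0` for `n = 2` and `n ≥ 4`: `(K₂^{−2,−2})'` is a multiple of `1 − ζ²`, and
`K_n^{−2,−2}` has the double factor `(ζ² − 1)²` for `n ≥ 4`. -/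

open scoped BigOperators

/-- Entry `B₁₁` of the Jacobian matrix of the bilinear map: `(x₂₁(1−ŷ) + x₃₄(1+ŷ))/4`. -/
noncomputable def B11 (x1 x2 x3 x4 yh : ℝ) : ℝ :=
  ((x2 - x1) * (1 - yh) + (x3 - x4) * (1 + yh)) / 4

/-- Entry `B₁₂`: `(x₄₁(1−x̂) + x₃₂(1+x̂))/4`. -/
noncomputable def B12 (x1 x2 x3 x4 xh : ℝ) : ℝ :=
  ((x4 - x1) * (1 - xh) + (x3 - x2) * (1 + xh)) / 4

/-- Entry `B₂₁`: `(y₂₁(1−ŷ) + y₃₄(1+ŷ))/4`. -/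
noncomputable def B21 (y1 y2 y3 y4 yh : ℝ) : ℝ :=
  ((y2 - y1) * (1 - yh) + (y3 - y4) * (1 + yh)) / 4

/-- Entry `B₂₂`: `(y₄₁(1−x̂) + y₃₂(1+x̂))/4`. -/
noncomputable def B22 (y1 y2 y3 y4 xh : ℝ) : ℝ :=
  ((y4 - y1) * (1 - xh) + (y3 - y2) * (1 + xh)) / 4

/-- The Jacobian determinant `J(x̂,ŷ) = det B(x̂,ŷ)` of the bilinear map. -/
noncomputable def Jdet (x1 x2 x3 x4 y1 y2 y3 y4 xh yh : ℝ) : ℝ :=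
  B11 x1 x2 x3 x4 yh * B22 y1 y2 y3 y4 xh - B12 x1 x2 x3 x4 xh * B21 y1 y2 y3 y4 yh

/-- Curl edge mode `ψ̂_{1,n}(x̂,ŷ) = J(x̂,ŷ)·K_1^{−2,−2}(x̂)·(0, (K_n^{−2,−2})'(ŷ))`. -/
noncomputable def psiCurl1 (x1 x2 x3 x4 y1 y2 y3 y4 : ℝ) (n : ℕ) (z : ℝ × ℝ) : ℝ × ℝ :=
  (Jdet x1 x2 x3 x4 y1 y2 y3 y4 z.1 z.2 * K2 1 z.1 * 0,
   Jdet x1 x2 x3 x4 y1 y2 y3 y4 z.1 z.2 * K2 1 z.1 * deriv (K2 n) z.2)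

theorem deriv_mul_mul_const_of_eq_zero {f g : ℝ → ℝ} {x : ℝ} (c : ℝ)
    (hf : DifferentiableAt ℝ f x) (hg : DifferentiableAt ℝ g x) (hgx : g x = 0) :
    deriv (fun t => f t * g t * c) x = f x * deriv g x * c := by
  rw [((hf.hasDerivAt.fun_mul hg.hasDerivAt).mul_const c).deriv, hgx]
  ring

theorem hasDerivAt_K2_one (x : ℝ) : HasDerivAt (K2 1) ((1 - x) * (-1 - 3 * x) / 4) x := by
  have h : HasDerivAt (fun ζ : ℝ => (1 - ζ) ^ 2 * (1 + ζ) / 4)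
      ((2 * (1 - x) * (-1) * (1 + x) + (1 - x) ^ 2 * 1) / 4) x := by
    have h1 := ((hasDerivAt_id x).const_sub 1).pow 2
    have h2 := (hasDerivAt_id x).const_add 1
    simpa using (h1.mul h2).div_const 4
  exact h.congr_deriv (by ring)

theorem K2_one_eq_zero_of_sq_eq_one {x : ℝ} (hx : x ^ 2 = 1) : K2 1 x = 0 := by
  rcases sq_eq_one_iff.mp hx with rfl | rfl <;> norm_num [K2]

theorem deriv_K2_two_eq_zero_of_sq_eq_one {x : ℝ} (hx : x ^ 2 = 1) : deriv (K2 2) x = 0 := by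
  have h : HasDerivAt (fun ζ : ℝ => (1 + ζ) ^ 2 * (2 - ζ) / 4)
      ((2 * (1 + x) * 1 * (2 - x) + (1 + x) ^ 2 * (-1)) / 4) x := by
    have h1 := ((hasDerivAt_id x).const_add 1).pow 2
    have h2 := (hasDerivAt_id x).const_sub 2
    simpa using (h1.mul h2).div_const 4
  have hK : K2 2 = fun ζ => (1 + ζ) ^ 2 * (2 - ζ) / 4 := rfl
  rw [hK, h.deriv]
  linear_combination (-3 / 4) * hx

theorem deriv_K2_add_four_eq_zero_of_sq_eq_one (m : ℕ) {x : ℝ} (hx : x ^ 2 = 1) :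
    deriv (K2 (m + 4)) x = 0 := by
  have hP : DifferentiableAt ℝ (jacobiP m 2 2) x := by
    unfold jacobiP
    fun_prop
  have hK : K2 (m + 4) = fun ζ => ((ζ ^ 2 - 1) / 4) ^ 2 * jacobiP m 2 2 ζ := rfl
  rw [hK, deriv_fun_mul (by fun_prop) hP, deriv_fun_pow (by fun_prop)]
  simp [hx]

theorem deriv_K2_eq_zero_of_sq_eq_one {n : ℕ} (hn : n = 2 ∨ 4 ≤ n) {x : ℝ} (hx : x ^ 2 = 1) :
    deriv (K2 n) x = 0 := by
  rcases hn with rfl | hn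
  · exact deriv_K2_two_eq_zero_of_sq_eq_one hx
  · obtain ⟨m, rfl⟩ := Nat.exists_eq_add_of_le' hn
    exact deriv_K2_add_four_eq_zero_of_sq_eq_one m hx

theorem differentiable_Jdet_fst (x1 x2 x3 x4 y1 y2 y3 y4 yh : ℝ) :
    Differentiable ℝ (fun t => Jdet x1 x2 x3 x4 y1 y2 y3 y4 t yh) := by
  unfold Jdet B11 B12 B21 B22
  fun_prop

section psiCurl1

variable {x1 x2 x3 x4 y1 y2 y3 y4 : ℝ} {n : ℕ}

theorem psiCurl1_snd_of_sq_fst_eq_one {xh : ℝ} (hx : xh ^ 2 = 1) (yh : ℝ) :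
    (psiCurl1 x1 x2 x3 x4 y1 y2 y3 y4 n (xh, yh)).2 = 0 := by
  simp only [psiCurl1, K2_one_eq_zero_of_sq_eq_one hx, mul_zero, zero_mul]

theorem scurl_psiCurl1 (z : ℝ × ℝ) :
    scurl (psiCurl1 x1 x2 x3 x4 y1 y2 y3 y4 n) z =
      deriv (fun t => Jdet x1 x2 x3 x4 y1 y2 y3 y4 t z.2 * K2 1 t * deriv (K2 n) z.2) z.1 := by
  simp only [scurl, psiCurl1, mul_zero, deriv_const', sub_zero]

theorem scurl_psiCurl1_of_sq_fst_eq_one {xh : ℝ} (hx : xh ^ 2 = 1) (yh : ℝ) :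
    scurl (psiCurl1 x1 x2 x3 x4 y1 y2 y3 y4 n) (xh, yh) =
      Jdet x1 x2 x3 x4 y1 y2 y3 y4 xh yh * deriv (K2 1) xh * deriv (K2 n) yh :=
  (scurl_psiCurl1 ..).trans <| deriv_mul_mul_const_of_eq_zero _
    (differentiable_Jdet_fst x1 x2 x3 x4 y1 y2 y3 y4 yh xh) (hasDerivAt_K2_one xh).differentiableAt
    (K2_one_eq_zero_of_sq_eq_one hx)

theorem scurl_psiCurl1_of_sq_snd_eq_one (hn : n = 2 ∨ 4 ≤ n) (xh : ℝ) {yh : ℝ}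
    (hy : yh ^ 2 = 1) : scurl (psiCurl1 x1 x2 x3 x4 y1 y2 y3 y4 n) (xh, yh) = 0 := by
  simp only [scurl_psiCurl1, deriv_K2_eq_zero_of_sq_eq_one hn hy, mul_zero, deriv_const']

end psiCurl1

/-- For `n ∈ {2} ∪ {k ≥ 4}`: (i) the tangential trace of `ψ̂_{1,n}` vanishes on all four
edges (first component identically zero, second component vanishing at `x̂ = ±1`);
(ii) `∇×ψ̂_{1,n}(−1,ŷ) = J(−1,ŷ)·(K_n^{−2,−2})'(ŷ)`; (iii) `∇×ψ̂_{1,n}(1,ŷ) = 0`;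
(iv) `∇×ψ̂_{1,n}(x̂,±1) = 0`. -/
theorem curl_edge_mode_gamma1 (x1 x2 x3 x4 y1 y2 y3 y4 : ℝ) (n : ℕ)
    (hn : n = 2 ∨ 4 ≤ n) :
    (∀ z : ℝ × ℝ, (psiCurl1 x1 x2 x3 x4 y1 y2 y3 y4 n z).1 = 0) ∧
    (∀ yh : ℝ, (psiCurl1 x1 x2 x3 x4 y1 y2 y3 y4 n (-1, yh)).2 = 0 ∧
      (psiCurl1 x1 x2 x3 x4 y1 y2 y3 y4 n (1, yh)).2 = 0) ∧
    (∀ yh : ℝ, scurl (psiCurl1 x1 x2 x3 x4 y1 y2 y3 y4 n) (-1, yh) =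
      Jdet x1 x2 x3 x4 y1 y2 y3 y4 (-1) yh * deriv (K2 n) yh) ∧
    (∀ yh : ℝ, scurl (psiCurl1 x1 x2 x3 x4 y1 y2 y3 y4 n) (1, yh) = 0) ∧
    (∀ xh : ℝ, scurl (psiCurl1 x1 x2 x3 x4 y1 y2 y3 y4 n) (xh, -1) = 0 ∧
      scurl (psiCurl1 x1 x2 x3 x4 y1 y2 y3 y4 n) (xh, 1) = 0) := by
  have hneg : (-1 : ℝ) ^ 2 = 1 := by norm_num
  have hpos : (1 : ℝ) ^ 2 = 1 := one_pow 2
  refine ⟨fun z => mul_zero _,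
    fun yh => ⟨psiCurl1_snd_of_sq_fst_eq_one hneg yh, psiCurl1_snd_of_sq_fst_eq_one hpos yh⟩,
    fun yh => ?_, fun yh => ?_,
    fun xh => ⟨scurl_psiCurl1_of_sq_snd_eq_one hn xh hneg,
      scurl_psiCurl1_of_sq_snd_eq_one hn xh hpos⟩⟩
  · rw [scurl_psiCurl1_of_sq_fst_eq_one hneg, (hasDerivAt_K2_one _).deriv]
    ring
  · rw [scurl_psiCurl1_of_sq_fst_eq_one hpos, (hasDerivAt_K2_one _).deriv]
    ring
end
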